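/- Let λ ∈ (0,1), σ > 0, and θ ∈ (0,1) with θ ≠ 1/2. Let c be the unique zero of f(c) = (c/((2θ−1+2cθ)(2−2θ−c(2θ−1))))^((1−θ)/(θ−1/2)) − (2θ−1+2cθ)²/(1−λ) in I(θ), set s̄ = (c/((2θ−1+2cθ)(2−2θ−c(2θ−1))))^(1/(2θ−1)) and g(s) = (−cs + (2θ−1+2cθ)s^(2θ))/(s − (2−2θ−c(2θ−1))s^(2θ)), and define μ̃(s) = σ²·g'(s)²·s²/(g(s)(c+g(s))) and σ̃(s) = σ·g'(s)·s/g(s). Then ∫₁^{s̄} (μ̃(s)²/(2σ̃(s)²)) · ((2θ−1)/(s̄^(2θ−1) − 1)) · s^(2θ−2) ds = (2θ−1)σ²s̄ / (2(1+c)(s̄ + (−2 − c + 2θ(1+c))·s̄^(2θ))). -/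

import Mathlib

open Real MeasureTheory intervalIntegral

/-- The interval `I(θ)` in which the root `c` of `f` is located. -/
noncomputable def noTradeInterval (θ : ℝ) : Set ℝ :=
  if θ < 1/2 then Set.Ioi ((1 - θ)/θ)
  else if θ < 1 then Set.Ioo ((1 - θ)/θ) ((1 - θ)/(θ - 1/2))
  else Set.Ioo ((1 - θ)/θ) 0

/-!
Write `p = 2θ - 1`, `a = 2θ - 1 + 2cθ`, `b = 2 - 2θ - c(2θ - 1)` and `v = s ^ p`. Then
`g = (a v - c) / (1 - b v)` is a Möbius transform of `v`, and `a - b c = p (1 + c)²`, so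
`s g'(s) / (c + g(s)) = p / (1 - b v)`. Since `μ̃ = σ̃² g / (c + g)`, the integrand
`μ̃² / (2 σ̃²) = σ̃² g² / (2 (c + g)²)` becomes `σ² p² / (2 (1 - b v)²)`, and against
`ν(ds) ∝ s ^ (p - 1) ds` it has the primitive `s ^ p / (p (1 - b s ^ p))`.

Nothing degenerates on `[1, s̄]`: `1 - b v` and `a v - c` are affine in `v`, and at the endpoints
`v = 1` and `v = s̄ ^ p = c / (a b)` they equal `p (1 + c)` resp. `p (1 + c) / a` and `p (1 + c)`
resp. `p c (1 + c) / b`, all of the sign of `p`. Finally `a > 1`, so `f(c) = 0` forces `s̄ ≠ 1`.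
-/

open Set

lemma affine_pos_of_mem_uIcc {α β u w v : ℝ} (hu : 0 < α + β * u) (hw : 0 < α + β * w)
    (hv : v ∈ uIcc u w) : 0 < α + β * v := by
  rcases le_total u w with h | h <;>
  [rw [uIcc_of_le h] at hv; rw [uIcc_of_ge h] at hv] <;>
  rcases le_total 0 β with hβ | hβ <;> nlinarith [hv.1, hv.2]

lemma rpow_mem_uIcc_rpow {u w s : ℝ} (p : ℝ) (hu : 0 < u) (hw : 0 < w) (hs : s ∈ uIcc u w) :
    s ^ p ∈ uIcc (u ^ p) (w ^ p) := by
  have hpos : uIcc u w ⊆ Ioi 0 := ordConnected_Ioi.uIcc_subset hu hw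
  rcases le_total 0 p with hp | hp
  · exact ((monotoneOn_rpow_Ici_of_exponent_nonneg hp).mono
      (hpos.trans Ioi_subset_Ici_self)).mapsTo_uIcc hs
  · exact ((antitoneOn_rpow_Ioi_of_exponent_nonpos hp).mono hpos).mapsTo_uIcc hs

lemma integral_rpow_sub_one_div_one_sub_mul_rpow_sq {p b u w : ℝ} (hp : p ≠ 0) (hu : 0 < u)
    (hw : 0 < w) (hden : ∀ s ∈ uIcc u w, 1 - b * s ^ p ≠ 0) :
    ∫ s in u..w, s ^ (p - 1) / (1 - b * s ^ p) ^ 2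
      = (w ^ p / (1 - b * w ^ p) - u ^ p / (1 - b * u ^ p)) / p := by
  have hpos : ∀ s ∈ uIcc u w, s ≠ 0 := fun s hs => (ordConnected_Ioi.uIcc_subset hu hw hs).ne'
  rw [sub_div, integral_eq_sub_of_hasDerivAt (f := fun s => s ^ p / (1 - b * s ^ p) / p)]
  · intro s hs
    have hrp := hasDerivAt_rpow_const (p := p) (Or.inl (hpos s hs))
    refine (hrp.div ((hrp.const_mul b).const_sub 1) (hden s hs)).div_const p |>.congr_deriv ?_
    rw [rpow_sub_one (hpos s hs)]
    field_simp
    ring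
  · refine ContinuousOn.intervalIntegrable fun s hs => ContinuousAt.continuousWithinAt ?_
    fun_prop (disch := simp [hpos s hs, hden s hs])

lemma sq_div_mul_sq_div_two_sq (x y z : ℝ) (hy : y ≠ 0) :
    (x ^ 2 / (y * z)) ^ 2 / (2 * (x / y) ^ 2) = (x / z) ^ 2 / 2 := by
  rcases eq_or_ne x 0 with rfl | hx
  · simp
  · field_simp

noncomputable def shadowRatio (a b c q s : ℝ) : ℝ := (-c * s + a * s ^ q) / (s - b * s ^ q)

section shadowRatio

variable {a b c q s : ℝ}

lemma shadowRatio_eq (hs : 0 < s) :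
    shadowRatio a b c q s = (a * s ^ (q - 1) - c) / (1 - b * s ^ (q - 1)) := by
  rw [shadowRatio, ← mul_div_mul_left _ (1 - b * s ^ (q - 1)) hs.ne', rpow_sub_one hs.ne']
  field_simp
  ring

lemma add_shadowRatio (hs : 0 < s) (hden : 1 - b * s ^ (q - 1) ≠ 0) :
    c + shadowRatio a b c q s = (a - b * c) * s ^ (q - 1) / (1 - b * s ^ (q - 1)) := by
  rw [shadowRatio_eq hs, add_div' _ _ _ hden]
  ring

lemma hasDerivAt_shadowRatio (hs : 0 < s) (hden : 1 - b * s ^ (q - 1) ≠ 0) :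
    HasDerivAt (shadowRatio a b c q)
      ((a - b * c) * (q - 1) * s ^ (q - 1) / (s * (1 - b * s ^ (q - 1)) ^ 2)) s := by
  have hrp := hasDerivAt_rpow_const (p := q) (Or.inl hs.ne')
  have hq : s ^ q = s * s ^ (q - 1) := by rw [rpow_sub_one hs.ne']; field_simp
  have hden' : s - b * s ^ q ≠ 0 := by
    rw [hq, show s - b * (s * s ^ (q - 1)) = s * (1 - b * s ^ (q - 1)) by ring]
    exact mul_ne_zero hs.ne' hden
  refine (((hasDerivAt_id' s).const_mul (-c)).add (hrp.const_mul a)).div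
    ((hasDerivAt_id' s).sub (hrp.const_mul b)) hden' |>.congr_deriv ?_
  simp only [Pi.add_apply, Pi.sub_apply, hq]
  field_simp
  ring

lemma deriv_shadowRatio_mul_div_add (hs : 0 < s) (hden : 1 - b * s ^ (q - 1) ≠ 0)
    (habc : a - b * c ≠ 0) :
    deriv (shadowRatio a b c q) s * s / (c + shadowRatio a b c q s)
      = (q - 1) / (1 - b * s ^ (q - 1)) := by
  rw [(hasDerivAt_shadowRatio hs hden).deriv, add_shadowRatio hs hden]
  have := rpow_pos_of_pos hs (q - 1)
  field_simp

lemma shadowRatio_drift_sq_div_two_diffusion_sq (σ : ℝ) (hs : 0 < s)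
    (hden : 1 - b * s ^ (q - 1) ≠ 0) (hnum : a * s ^ (q - 1) - c ≠ 0) (habc : a - b * c ≠ 0) :
    (σ ^ 2 * deriv (shadowRatio a b c q) s ^ 2 * s ^ 2
        / (shadowRatio a b c q s * (c + shadowRatio a b c q s))) ^ 2
      / (2 * (σ * deriv (shadowRatio a b c q) s * s / shadowRatio a b c q s) ^ 2)
      = σ ^ 2 * (q - 1) ^ 2 / 2 / (1 - b * s ^ (q - 1)) ^ 2 := by
  have hG : shadowRatio a b c q s ≠ 0 := by
    rw [shadowRatio_eq hs]
    exact div_ne_zero hnum hden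
  have hD := deriv_shadowRatio_mul_div_add hs hden habc
  set D := deriv (shadowRatio a b c q) s
  set G := shadowRatio a b c q s
  rw [show σ ^ 2 * D ^ 2 * s ^ 2 = (σ * D * s) ^ 2 by ring, sq_div_mul_sq_div_two_sq _ _ _ hG,
    show σ * D * s / (c + G) = σ * (D * s / (c + G)) by ring, hD]
  field_simp

lemma integral_shadowRatio_drift_sq_div_two_diffusion_sq (σ : ℝ) (hq : q - 1 ≠ 0) {S : ℝ}
    (hS : 0 < S) (hS1 : S ^ (q - 1) ≠ 1) (habc : a - b * c ≠ 0)
    (hnondeg : ∀ s ∈ uIcc 1 S, 1 - b * s ^ (q - 1) ≠ 0 ∧ a * s ^ (q - 1) - c ≠ 0) :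
    ∫ s in (1:ℝ)..S,
        (σ ^ 2 * deriv (shadowRatio a b c q) s ^ 2 * s ^ 2
            / (shadowRatio a b c q s * (c + shadowRatio a b c q s))) ^ 2
          / (2 * (σ * deriv (shadowRatio a b c q) s * s / shadowRatio a b c q s) ^ 2)
          * ((q - 1) / (S ^ (q - 1) - 1)) * s ^ (q - 2)
      = σ ^ 2 * (q - 1) ^ 2 * S / (2 * (1 - b) * (S - b * S ^ q)) := by
  have hintegrand : EqOn
      (fun s => (σ ^ 2 * deriv (shadowRatio a b c q) s ^ 2 * s ^ 2
            / (shadowRatio a b c q s * (c + shadowRatio a b c q s))) ^ 2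
          / (2 * (σ * deriv (shadowRatio a b c q) s * s / shadowRatio a b c q s) ^ 2)
          * ((q - 1) / (S ^ (q - 1) - 1)) * s ^ (q - 2))
      (fun s => σ ^ 2 * (q - 1) ^ 2 / 2 * ((q - 1) / (S ^ (q - 1) - 1))
          * (s ^ (q - 1 - 1) / (1 - b * s ^ (q - 1)) ^ 2)) (uIcc 1 S) := by
    intro s hs
    have hs0 : 0 < s := ordConnected_Ioi.uIcc_subset one_pos hS hs
    dsimp only
    rw [shadowRatio_drift_sq_div_two_diffusion_sq σ hs0 (hnondeg s hs).1 (hnondeg s hs).2 habc,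
      show q - 2 = q - 1 - 1 by ring]
    ring
  have h1 := (hnondeg 1 left_mem_uIcc).1
  have hS' : 1 - S ^ (q - 1) * b ≠ 0 := by rw [mul_comm]; exact (hnondeg S right_mem_uIcc).1
  have hSq : S ^ q = S ^ (q - 1) * S := by rw [← rpow_add_one hS.ne']; ring_nf
  rw [one_rpow, mul_one] at h1
  rw [integral_congr hintegrand, intervalIntegral.integral_const_mul,
    integral_rpow_sub_one_div_one_sub_mul_rpow_sq hq one_pos hS fun s hs => (hnondeg s hs).1,
    one_rpow, mul_one, hSq]
  have := sub_ne_zero.mpr hS1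
  have := hS.ne'
  field_simp
  ring

end shadowRatio

lemma coeffs_pos_of_mem_noTradeInterval {θ c : ℝ} (hθ0 : 0 < θ) (hθ1 : θ < 1)
    (h : c ∈ noTradeInterval θ) :
    0 < c ∧ 1 < 2 * θ - 1 + 2 * c * θ ∧ 0 < 2 - 2 * θ - c * (2 * θ - 1) := by
  suffices (1 - θ) / θ < c ∧ 0 < 2 - 2 * θ - c * (2 * θ - 1) by
    obtain ⟨hc, hb⟩ := this
    refine ⟨(div_pos (by linarith) hθ0).trans hc, ?_, hb⟩
    rw [div_lt_iff₀ hθ0] at hc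
    linarith
  unfold noTradeInterval at h
  split_ifs at h with hθ
  · have := (div_pos (by linarith) hθ0).trans (mem_Ioi.mp h)
    exact ⟨h, by nlinarith⟩
  · obtain ⟨hc, hc'⟩ := h
    rcases (not_lt.mp hθ).eq_or_lt with rfl | hθ2
    · norm_num at hc hc'
      linarith
    · exact ⟨hc, by linarith [(lt_div_iff₀ (by linarith)).mp hc']⟩

lemma one_sub_mul_rpow_ne_zero_and_mul_rpow_sub_ne_zero {a b c p S s : ℝ} (ha : 0 < a)
    (hb : 0 < b) (hc : 0 < c) (hp : p ≠ 0) (hb1 : 1 - b = p * (1 + c)) (hac : a - c = p * (1 + c))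
    (hS : 0 < S) (hSp : a * b * S ^ p = c) (hs : s ∈ uIcc 1 S) :
    1 - b * s ^ p ≠ 0 ∧ a * s ^ p - c ≠ 0 := by
  have hv := rpow_mem_uIcc_rpow p one_pos hS hs
  rw [one_rpow] at hv
  have hpc : 0 < p ^ 2 * (1 + c) := by positivity
  constructor
  · have h1 : 0 < p + -(p * b) * 1 := by linear_combination hpc - p * hb1
    have hS' : 0 < p + -(p * b) * S ^ p := pos_of_mul_pos_right (a := a) (by
      linear_combination hpc - p * hac + p * hSp) ha.le
    exact right_ne_zero_of_mul
      (show 0 < p * (1 - b * s ^ p) by linear_combination affine_pos_of_mem_uIcc h1 hS' hv).ne'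
  · have h1 : 0 < -(p * c) + p * a * 1 := by linear_combination hpc - p * hac
    have hS' : 0 < -(p * c) + p * a * S ^ p := pos_of_mul_pos_right (a := b) (by
      linear_combination c * hpc - p * c * hb1 - p * hSp) hb.le
    exact right_ne_zero_of_mul
      (show 0 < p * (a * s ^ p - c) by linear_combination affine_pos_of_mem_uIcc h1 hS' hv).ne'

theorem growth_optimal_growth_rate_closed_form_general
    (lam θ sigma c sbar : ℝ) (g mutilde sigmatilde : ℝ → ℝ)
    (hlam : lam ∈ Set.Ioo (0:ℝ) 1)
    (hθ : θ ∈ Set.Ioo (0:ℝ) 1) (hθhalf : θ ≠ 1/2)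
    (hcI : c ∈ noTradeInterval θ)
    (hfc : (c / ((2*θ - 1 + 2*c*θ) * (2 - 2*θ - c*(2*θ - 1)))) ^ ((1 - θ)/(θ - 1/2))
        - (2*θ - 1 + 2*c*θ)^2 / (1 - lam) = 0)
    (hsbar : sbar = (c / ((2*θ - 1 + 2*c*θ) * (2 - 2*θ - c*(2*θ - 1)))) ^ (1/(2*θ - 1)))
    (hg : ∀ s : ℝ, g s = (-c*s + (2*θ - 1 + 2*c*θ) * s ^ (2*θ))
        / (s - (2 - 2*θ - c*(2*θ - 1)) * s ^ (2*θ)))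
    (hmutilde : ∀ s : ℝ, mutilde s = sigma^2 * (deriv g s)^2 * s^2 / (g s * (c + g s)))
    (hsigmatilde : ∀ s : ℝ, sigmatilde s = sigma * deriv g s * s / g s) :
    ∫ s in (1:ℝ)..sbar,
        (mutilde s)^2 / (2 * (sigmatilde s)^2)
          * ((2*θ - 1) / (sbar ^ (2*θ - 1) - 1)) * s ^ (2*θ - 2)
      = (2*θ - 1) * sigma^2 * sbar
          / (2 * (1 + c) * (sbar + (-2 - c + 2*θ*(1 + c)) * sbar ^ (2*θ))) := by
  obtain ⟨hθ0, hθ1⟩ := hθ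
  have hp : 2 * θ - 1 ≠ 0 := fun h => hθhalf (by linarith)
  obtain ⟨hc, ha, hb⟩ := coeffs_pos_of_mem_noTradeInterval hθ0 hθ1 hcI
  obtain rfl : g = shadowRatio (2 * θ - 1 + 2 * c * θ) (2 - 2 * θ - c * (2 * θ - 1)) c (2 * θ) :=
    funext hg
  set a := 2 * θ - 1 + 2 * c * θ
  set b := 2 - 2 * θ - c * (2 * θ - 1)
  have hx0 : 0 < c / (a * b) := by positivity
  have hx1 : c / (a * b) ≠ 1 := by
    intro h1
    rw [h1, one_rpow, sub_eq_zero, eq_div_iff (by linarith [hlam.2])] at hfc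
    nlinarith [hlam.1]
  have hsbar0 : 0 < sbar := hsbar ▸ rpow_pos_of_pos hx0 _
  have hV : sbar ^ (2 * θ - 1) = c / (a * b) := by rw [hsbar, one_div, rpow_inv_rpow hx0.le hp]
  have habc : a - b * c = (2 * θ - 1) * (1 + c) ^ 2 := by ring
  simp only [hmutilde, hsigmatilde]
  rw [integral_shadowRatio_drift_sq_div_two_diffusion_sq sigma hp hsbar0 (hV ▸ hx1)
      (habc ▸ mul_ne_zero hp (by positivity)) fun s hs =>
      one_sub_mul_rpow_ne_zero_and_mul_rpow_sub_ne_zero (by linarith) hb hc hp (by ring) (by ring)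
        hsbar0 (by rw [hV]; field_simp) hs,
    show 1 - b = (2 * θ - 1) * (1 + c) by ring, show -2 - c + 2 * θ * (1 + c) = -b by ring]
  field_simp
  ring

theorem growth_optimal_growth_rate_closed_form
    (lam θ sigma c sbar : ℝ) (g mutilde sigmatilde : ℝ → ℝ)
    (hlam : lam ∈ Set.Ioo (0:ℝ) 1) (hsigma : 0 < sigma)
    (hθ : θ ∈ Set.Ioo (0:ℝ) 1) (hθhalf : θ ≠ 1/2)
    (hcI : c ∈ noTradeInterval θ)
    (hfc : (c / ((2*θ - 1 + 2*c*θ) * (2 - 2*θ - c*(2*θ - 1)))) ^ ((1 - θ)/(θ - 1/2))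
        - (2*θ - 1 + 2*c*θ)^2 / (1 - lam) = 0)
    (hsbar : sbar = (c / ((2*θ - 1 + 2*c*θ) * (2 - 2*θ - c*(2*θ - 1)))) ^ (1/(2*θ - 1)))
    (hg : ∀ s : ℝ, g s = (-c*s + (2*θ - 1 + 2*c*θ) * s ^ (2*θ))
        / (s - (2 - 2*θ - c*(2*θ - 1)) * s ^ (2*θ)))
    (hmutilde : ∀ s : ℝ, mutilde s = sigma^2 * (deriv g s)^2 * s^2 / (g s * (c + g s)))
    (hsigmatilde : ∀ s : ℝ, sigmatilde s = sigma * deriv g s * s / g s) :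
    ∫ s in (1:ℝ)..sbar,
        (mutilde s)^2 / (2 * (sigmatilde s)^2)
          * ((2*θ - 1) / (sbar ^ (2*θ - 1) - 1)) * s ^ (2*θ - 2)
      = (2*θ - 1) * sigma^2 * sbar
          / (2 * (1 + c) * (sbar + (-2 - c + 2*θ*(1 + c)) * sbar ^ (2*θ))) :=
  growth_optimal_growth_rate_closed_form_general lam θ sigma c sbar g mutilde sigmatilde hlam hθ
    hθhalf hcI hfc hsbar hg hmutilde hsigmatilde
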